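/- arXiv:1408.2143 — 4 statements merged into one kernel-verified Lean document; each statement's English description precedes it below -/
import Mathlib

section
/- If A is a stable n×n complex matrix and B an n×p complex matrix, then the Stein equation X = A X A* + B B* has a unique solution X, and this solution is positive semidefinite. -/
/-!
Stability of `A` means, by Gelfand's formula, that `A ^ k → 0`. Iterating the equation gives
`X = ∑_{j<k} A^j B Bᴴ (Aᴴ)^j + A^k X (Aᴴ)^k`, so every solution is the limit of the same
partial sums of positive semidefinite matrices: it is unique, and positive semidefinite because
that cone is closed. Uniqueness makes `X ↦ X - A X Aᴴ` injective, hence surjective in finite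
dimension, which gives existence.
-/

open Matrix
open scoped ComplexOrder
open Filter Topology
open scoped NNReal

theorem tendsto_pow_atTop_nhds_zero_of_forall_norm_lt_one {A : Type*} [NormedRing A]
    [NormedAlgebra ℂ A] [CompleteSpace A] {a : A} (ha : ∀ z ∈ spectrum ℂ a, ‖z‖ < 1) :
    Tendsto (a ^ ·) atTop (𝓝 0) := by
  rcases subsingleton_or_nontrivial A with _ | _
  · simp [Subsingleton.elim _ (0 : A)]
  have hρ : spectralRadius ℂ a < (1 : ℝ≥0) :=
    spectrum.spectralRadius_lt_of_forall_lt a fun z hz => by exact_mod_cast ha z hz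
  obtain ⟨c, hρc, hc1⟩ := ENNReal.lt_iff_exists_nnreal_btwn.mp hρ
  -- Gelfand's formula: eventually `‖a ^ k‖₊ ^ (1 / k) < c`, that is `‖a ^ k‖₊ < c ^ k`.
  have hbound : ∀ᶠ k : ℕ in atTop, ‖a ^ k‖ ≤ (c : ℝ) ^ k := by
    filter_upwards
      [(spectrum.pow_nnnorm_pow_one_div_tendsto_nhds_spectralRadius a).eventually_lt_const hρc,
      eventually_gt_atTop 0] with k hk hk0
    rw [one_div, ENNReal.rpow_inv_lt_iff (by positivity), ENNReal.rpow_natCast] at hk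
    exact_mod_cast hk.le
  exact squeeze_zero_norm' hbound
    (tendsto_pow_atTop_nhds_zero_of_lt_one c.coe_nonneg (by exact_mod_cast hc1))

theorem Matrix.tendsto_pow_atTop_nhds_zero_of_forall_norm_lt_one {n : Type*} [Fintype n]
    [DecidableEq n] {A : Matrix n n ℂ} (hA : ∀ μ ∈ spectrum ℂ A, ‖μ‖ < 1) :
    Tendsto (A ^ ·) atTop (𝓝 0) :=
  letI := Matrix.linftyOpNormedRing (n := n) (α := ℂ)
  letI := Matrix.linftyOpNormedAlgebra (n := n) (R := ℂ) (α := ℂ)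
  haveI := FiniteDimensional.complete ℂ (Matrix n n ℂ)
  _root_.tendsto_pow_atTop_nhds_zero_of_forall_norm_lt_one hA

theorem eq_sum_range_add_pow_mul_pow {R : Type*} [Semiring R] {a b c x : R}
    (hx : x = a * x * b + c) (k : ℕ) :
    x = ∑ j ∈ Finset.range k, a ^ j * c * b ^ j + a ^ k * x * b ^ k := by
  induction k with
  | zero => simp
  | succ k ih =>
    calc x = ∑ j ∈ Finset.range k, a ^ j * c * b ^ j + a ^ k * (a * x * b + c) * b ^ k := by
          rw [← hx]; exact ih
      _ = _ := by
          rw [Finset.sum_range_succ, pow_succ a, pow_succ' b]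
          simp only [mul_add, add_mul, mul_assoc]
          abel

section Topological

variable {R : Type*} [Ring R] [TopologicalSpace R] [IsTopologicalRing R] {a b : R}

theorem tendsto_sum_range_of_eq_mul_mul_add (ha : Tendsto (a ^ ·) atTop (𝓝 0))
    (hb : Tendsto (b ^ ·) atTop (𝓝 0)) {c x : R} (hx : x = a * x * b + c) :
    Tendsto (fun k => ∑ j ∈ Finset.range k, a ^ j * c * b ^ j) atTop (𝓝 x) := by
  have hlim : Tendsto (fun k => x - a ^ k * x * b ^ k) atTop (𝓝 x) := by
    simpa using tendsto_const_nhds.sub ((ha.mul_const x).mul hb)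
  exact hlim.congr fun k => sub_eq_iff_eq_add.mpr (eq_sum_range_add_pow_mul_pow hx k)

theorem eq_of_eq_mul_mul_add [T2Space R] (ha : Tendsto (a ^ ·) atTop (𝓝 0))
    (hb : Tendsto (b ^ ·) atTop (𝓝 0)) {c x y : R} (hx : x = a * x * b + c)
    (hy : y = a * y * b + c) : x = y :=
  tendsto_nhds_unique (tendsto_sum_range_of_eq_mul_mul_add ha hb hx)
    (tendsto_sum_range_of_eq_mul_mul_add ha hb hy)

end Topological

theorem existsUnique_eq_mul_mul_add {K R : Type*} [Field K] [Ring R] [Algebra K R]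
    [FiniteDimensional K R] {a b : R}
    (h : ∀ c x y : R, x = a * x * b + c → y = a * y * b + c → x = y) (c : R) :
    ∃! x : R, x = a * x * b + c := by
  let L : R →ₗ[K] R := LinearMap.id - LinearMap.mulLeftRight K (a, b)
  have hL : ∀ x c, L x = c ↔ x = a * x * b + c := fun x c => by
    simp [L, sub_eq_iff_eq_add']
  have hinj : Function.Injective L := fun x y hxy =>
    h (L y) x y ((hL x _).mp hxy) ((hL y _).mp rfl)
  have hbij : Function.Bijective L := ⟨hinj, LinearMap.injective_iff_surjective.mp hinj⟩
  simpa only [hL] using hbij.existsUnique c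

theorem Matrix.isClosed_setOf_posSemidef {n 𝕜 : Type*} [Fintype n] [RCLike 𝕜] :
    IsClosed {M : Matrix n n 𝕜 | M.PosSemidef} := by
  simp only [posSemidef_iff_dotProduct_mulVec, Set.ofPred_and, Set.ofPred_forall]
  refine .inter (isClosed_eq continuous_id.matrix_conjTranspose continuous_id) ?_
  exact isClosed_iInter fun x => isClosed_Ici.preimage (by fun_prop)

/-- If `A` is a stable `n×n` complex matrix and `B` an `n×p` complex matrix, then the Stein
equation `X = A X Aᴴ + B Bᴴ` has a unique solution, and this solution is positive
semidefinite. -/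
theorem stmt1 {n p : ℕ} (A : Matrix (Fin n) (Fin n) ℂ) (B : Matrix (Fin n) (Fin p) ℂ)
    (hA : ∀ μ ∈ spectrum ℂ A, ‖μ‖ < 1) :
    (∃! X : Matrix (Fin n) (Fin n) ℂ, X = A * X * Aᴴ + B * Bᴴ) ∧
      (∀ X : Matrix (Fin n) (Fin n) ℂ, X = A * X * Aᴴ + B * Bᴴ → X.PosSemidef) := by
  have hpow := Matrix.tendsto_pow_atTop_nhds_zero_of_forall_norm_lt_one hA
  have hpowH : Tendsto (Aᴴ ^ ·) atTop (𝓝 0) := by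
    simpa [Function.comp_def, star_eq_conjTranspose] using (continuous_star.tendsto 0).comp hpow
  refine ⟨existsUnique_eq_mul_mul_add (K := ℂ)
    (fun _ _ _ => eq_of_eq_mul_mul_add hpow hpowH) _, fun X hX => ?_⟩
  refine Matrix.isClosed_setOf_posSemidef.mem_of_tendsto
    (tendsto_sum_range_of_eq_mul_mul_add hpow hpowH hX) (.of_forall fun k => ?_)
  refine posSemidef_sum _ fun j _ => ?_
  have : A ^ j * (B * Bᴴ) * Aᴴ ^ j = A ^ j * B * (A ^ j * B)ᴴ := by
    simp only [conjTranspose_mul, conjTranspose_pow, Matrix.mul_assoc]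
  rw [this]
  exact posSemidef_self_mul_conjTranspose _
end

section
/- Let G(z) = D1 + z C (I_n - zA)^{-1} B1 and K(z) = D2 + z C (I_n - zA)^{-1} B2 with A stable, and let P1, P2 be the controllability Gramians of {A,B1} and {A,B2}. Define R(z) = G(z) G(1/z̄)* - K(z) K(1/z̄)*. Then for all z on the unit circle (indeed for all z ≠ 0 where both sides are defined), R(z) = z C (I_n - zA)^{-1} Γ + R_0 + Γ* (z I_n - A*)^{-1} C*, where R_0 = D1 D1* - D2 D2* + C (P1 - P2) C* and Γ = B1 D1* - B2 D2* + A (P1 - P2) C*. -/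
/-!
The stability of `A` enters twice. It makes `1 - zA` invertible on the unit circle, and, through
Gelfand's formula (`‖Aᵏ‖ < 1` for some `k`), it forces the homogeneous Stein equation
`Q = A Q Aᴴ` to have only the solution `Q = 0`; applied to `Q = Pᴴ - P` this makes the
Gramians Hermitian.

The identity itself rests on the splitting
`P - A P Aᴴ = (1 - zA) P (1 - z⁻¹Aᴴ) + z⁻¹ (1 - zA) P Aᴴ + z A P (1 - z⁻¹Aᴴ)`:
multiplying by `(1 - zA)⁻¹` on the left and `(1 - z⁻¹Aᴴ)⁻¹` on the right turns the Gramian term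
`(1 - zA)⁻¹ B Bᴴ (1 - z⁻¹Aᴴ)⁻¹` of `G(z) G(1/z̄)ᴴ` into a constant, a causal and an anticausal
part. Since `conj (1/z̄) = z⁻¹`, this works for every `z ≠ 0` at which both resolvents exist.
-/

open Matrix Filter

section BanachAlgebra

variable {𝔸 : Type*} [NormedRing 𝔸] [NormedAlgebra ℂ 𝔸] [CompleteSpace 𝔸]

theorem eventually_norm_pow_lt_one [Nontrivial 𝔸] {a : 𝔸}
    (ha : ∀ μ ∈ spectrum ℂ a, ‖μ‖ < 1) : ∀ᶠ k in atTop, ‖a ^ k‖ < 1 := by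
  have hρ : spectralRadius ℂ a < 1 := by
    simpa using spectrum.spectralRadius_lt_of_forall_lt a (r := 1) fun μ hμ ↦ ha μ hμ
  filter_upwards [(spectrum.pow_norm_pow_one_div_tendsto_nhds_spectralRadius a).eventually_lt_const
    hρ, eventually_ge_atTop 1] with k hk hk1
  rwa [ENNReal.ofReal_lt_one, Real.rpow_lt_one_iff' (norm_nonneg _) (by positivity)] at hk

theorem eq_zero_of_eq_mul_mul {a b q : 𝔸} (ha : ∀ μ ∈ spectrum ℂ a, ‖μ‖ < 1)
    (hb : ∀ μ ∈ spectrum ℂ b, ‖μ‖ < 1) (hq : q = a * q * b) : q = 0 := by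
  cases subsingleton_or_nontrivial 𝔸
  · exact Subsingleton.elim _ _
  obtain ⟨k, hak, hbk⟩ :=
    ((eventually_norm_pow_lt_one ha).and (eventually_norm_pow_lt_one hb)).exists
  have hqk : ∀ j : ℕ, q = a ^ j * q * b ^ j := by
    intro j
    induction j with
    | zero => simp
    | succ j ih =>
      calc q = a * (a ^ j * q * b ^ j) * b := by rw [← ih, ← hq]
        _ = a ^ (j + 1) * q * b ^ (j + 1) := by rw [pow_succ', pow_succ]; simp only [mul_assoc]
  have hle : ‖q‖ ≤ ‖a ^ k‖ * ‖q‖ * ‖b ^ k‖ := by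
    conv_lhs => rw [hqk k]
    exact (norm_mul_le _ _).trans (mul_le_mul_of_nonneg_right (norm_mul_le _ _) (norm_nonneg _))
  have hab : ‖a ^ k‖ * ‖b ^ k‖ < 1 :=
    mul_lt_one_of_nonneg_of_lt_one_left (norm_nonneg _) hak hbk.le
  by_contra hq0
  have := mul_lt_mul_of_pos_right hab (norm_pos_iff.2 hq0)
  linarith [show ‖a ^ k‖ * ‖q‖ * ‖b ^ k‖ = ‖a ^ k‖ * ‖b ^ k‖ * ‖q‖ by ring]

end BanachAlgebra

section Algebra

variable {𝔸 : Type*} [Ring 𝔸] [Algebra ℂ 𝔸]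

theorem isUnit_one_sub_smul_of_norm_le_one {a : 𝔸} (ha : ∀ μ ∈ spectrum ℂ a, ‖μ‖ < 1) {w : ℂ}
    (hw : ‖w‖ ≤ 1) : IsUnit (1 - w • a) := by
  rcases eq_or_ne w 0 with rfl | hw0
  · simp
  have hmem : w⁻¹ ∉ spectrum ℂ a := fun h ↦ by
    have := ha _ h
    rw [norm_inv] at this
    exact this.not_ge ((one_le_inv₀ (norm_pos_iff.2 hw0)).2 hw)
  rw [spectrum.notMem_iff, Algebra.algebraMap_eq_smul_one] at hmem
  have h : 1 - w • a = Units.mk0 w hw0 • (w⁻¹ • 1 - a) := by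
    rw [Units.smul_mk0, smul_sub, smul_smul, mul_inv_cancel₀ hw0, one_smul]
  rw [h]
  exact (isUnit_smul_iff _ _).2 hmem

theorem forall_norm_lt_one_spectrum_star [StarRing 𝔸] [StarModule ℂ 𝔸] {a : 𝔸}
    (ha : ∀ μ ∈ spectrum ℂ a, ‖μ‖ < 1) : ∀ μ ∈ spectrum ℂ (star a), ‖μ‖ < 1 := by
  rw [spectrum.map_star]
  intro μ hμ
  simpa using ha _ hμ

end Algebra

theorem isSelfAdjoint_of_eq_mul_mul_star_add {𝔸 : Type*} [NormedRing 𝔸] [NormedAlgebra ℂ 𝔸]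
    [CompleteSpace 𝔸] [StarRing 𝔸] [StarModule ℂ 𝔸] {a p s : 𝔸}
    (ha : ∀ μ ∈ spectrum ℂ a, ‖μ‖ < 1) (hs : IsSelfAdjoint s) (hp : p = a * p * star a + s) :
    IsSelfAdjoint p := by
  have hp' : star p = a * star p * star a + s := by
    conv_lhs => rw [hp]
    rw [star_add, star_mul, star_mul, star_star, hs.star_eq, mul_assoc]
  have hdiff : star p - p = a * (star p - p) * star a :=
    calc star p - p = (a * star p * star a + s) - (a * p * star a + s) := by rw [← hp', ← hp]
      _ = a * (star p - p) * star a := by noncomm_ring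
  exact sub_eq_zero.1 (eq_zero_of_eq_mul_mul ha (forall_norm_lt_one_spectrum_star ha) hdiff)

namespace Matrix

section Stein

attribute [local instance] Matrix.linftyOpNormedRing Matrix.linftyOpNormedAlgebra

theorem isHermitian_of_eq_mul_mul_conjTranspose_add {ι : Type*} [Fintype ι] [DecidableEq ι]
    {A P S : Matrix ι ι ℂ} (hA : ∀ μ ∈ spectrum ℂ A, ‖μ‖ < 1) (hS : S.IsHermitian)
    (hP : P = A * P * Aᴴ + S) : P.IsHermitian :=
  isSelfAdjoint_of_eq_mul_mul_star_add hA hS hP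

end Stein

variable {ι β γ : Type*} [Fintype ι] [DecidableEq ι] [Fintype β]

theorem one_sub_smul_inv_mul_sub_mul_mul {𝕜 : Type*} [Field 𝕜] {A M : Matrix ι ι 𝕜}
    (X : Matrix ι ι 𝕜) {z : 𝕜} (hz : z ≠ 0) (hA : IsUnit (1 - z • A).det)
    (hM : IsUnit (1 - z⁻¹ • M).det) :
    (1 - z • A)⁻¹ * (X - A * X * M) * (1 - z⁻¹ • M)⁻¹ =
      X + z⁻¹ • (X * M * (1 - z⁻¹ • M)⁻¹) + z • ((1 - z • A)⁻¹ * A * X) := by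
  have hsplit : X - A * X * M = (1 - z • A) * X * (1 - z⁻¹ • M)
      + z⁻¹ • ((1 - z • A) * X * M) + z • (A * X * (1 - z⁻¹ • M)) := by
    simp only [mul_sub, sub_mul, mul_one, one_mul, smul_sub, smul_mul_assoc, mul_smul_comm,
      smul_smul, mul_inv_cancel₀ hz, inv_mul_cancel₀ hz, one_smul]
    abel
  rw [hsplit]
  simp only [mul_add, add_mul, mul_smul_comm, smul_mul_assoc, ← mul_assoc, nonsing_inv_mul _ hA,
    one_mul]
  simp only [mul_assoc, mul_nonsing_inv _ hM, mul_one]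

theorem transfer_mul_conjTranspose {A P : Matrix ι ι ℂ} {B : Matrix ι β ℂ}
    {C : Matrix γ ι ℂ} (D : Matrix γ β ℂ) {z : ℂ} (hz : z ≠ 0)
    (hA : IsUnit (1 - z • A).det) (hAH : IsUnit (1 - z⁻¹ • Aᴴ).det)
    (hP : P = A * P * Aᴴ + B * Bᴴ) (hPh : P.IsHermitian) :
    (D + z • (C * (1 - z • A)⁻¹ * B)) *
        (D + (starRingEnd ℂ z)⁻¹ • (C * (1 - (starRingEnd ℂ z)⁻¹ • A)⁻¹ * B))ᴴ =
      z • (C * (1 - z • A)⁻¹ * (B * Dᴴ + A * P * Cᴴ)) + (D * Dᴴ + C * P * Cᴴ) +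
        (B * Dᴴ + A * P * Cᴴ)ᴴ * (z • (1 : Matrix ι ι ℂ) - Aᴴ)⁻¹ * Cᴴ := by
  have hconj : (D + (starRingEnd ℂ z)⁻¹ • (C * (1 - (starRingEnd ℂ z)⁻¹ • A)⁻¹ * B))ᴴ =
      Dᴴ + z⁻¹ • (Bᴴ * (1 - z⁻¹ • Aᴴ)⁻¹ * Cᴴ) := by
    simp [conjTranspose_nonsing_inv, conjTranspose_sub, conjTranspose_smul, Matrix.mul_assoc]
  have hres : (z • (1 : Matrix ι ι ℂ) - Aᴴ)⁻¹ = z⁻¹ • (1 - z⁻¹ • Aᴴ)⁻¹ := by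
    have : z • (1 : Matrix ι ι ℂ) - Aᴴ = Units.mk0 z hz • (1 - z⁻¹ • Aᴴ) := by
      rw [Units.smul_mk0, smul_sub, smul_smul, mul_inv_cancel₀ hz, one_smul]
    rw [this, Matrix.inv_smul' _ _ hAH, Units.smul_def, Units.val_inv_eq_inv_val, Units.val_mk0]
  have hsand := one_sub_smul_inv_mul_sub_mul_mul P hz hA hAH
  rw [← eq_sub_of_add_eq' hP.symm] at hsand
  rw [hconj, hres]
  calc _ = D * Dᴴ + z⁻¹ • (D * Bᴴ * (1 - z⁻¹ • Aᴴ)⁻¹ * Cᴴ) + z • (C * (1 - z • A)⁻¹ * B * Dᴴ)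
        + C * ((1 - z • A)⁻¹ * (B * Bᴴ) * (1 - z⁻¹ • Aᴴ)⁻¹) * Cᴴ := by
        simp only [Matrix.mul_add, Matrix.add_mul, Matrix.smul_mul, Matrix.mul_smul, smul_add,
          smul_smul, inv_mul_cancel₀ hz, one_smul, Matrix.mul_assoc]
        abel
    _ = _ := by
        rw [hsand]
        simp only [conjTranspose_add, conjTranspose_mul, conjTranspose_conjTranspose, hPh.eq,
          Matrix.mul_add, Matrix.add_mul, Matrix.smul_mul, Matrix.mul_smul, smul_add,
          Matrix.mul_assoc]
        abel

end Matrix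

/-- Realization of `R(z) = G(z) G(1/z̄)* - K(z) K(1/z̄)*` on the unit circle, where
`G(z) = D1 + zC(I - zA)⁻¹B1` and `K(z) = D2 + zC(I - zA)⁻¹B2` with `A` stable and
`P1, P2` the controllability Gramians of `{A,B1}` and `{A,B2}`. -/
theorem stmt4 {n m p q : ℕ} (A : Matrix (Fin n) (Fin n) ℂ)
    (B1 : Matrix (Fin n) (Fin p) ℂ) (B2 : Matrix (Fin n) (Fin q) ℂ)
    (C : Matrix (Fin m) (Fin n) ℂ)
    (D1 : Matrix (Fin m) (Fin p) ℂ) (D2 : Matrix (Fin m) (Fin q) ℂ)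
    (hA : ∀ μ ∈ spectrum ℂ A, ‖μ‖ < 1)
    (P1 P2 : Matrix (Fin n) (Fin n) ℂ)
    (hP1 : P1 = A * P1 * Aᴴ + B1 * B1ᴴ) (hP2 : P2 = A * P2 * Aᴴ + B2 * B2ᴴ)
    (G : ℂ → Matrix (Fin m) (Fin p) ℂ) (K : ℂ → Matrix (Fin m) (Fin q) ℂ)
    (hG : ∀ z : ℂ, G z = D1 + z • (C * (1 - z • A)⁻¹ * B1))
    (hK : ∀ z : ℂ, K z = D2 + z • (C * (1 - z • A)⁻¹ * B2))
    (R0 : Matrix (Fin m) (Fin m) ℂ) (Γ : Matrix (Fin n) (Fin m) ℂ)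
    (hR0 : R0 = D1 * D1ᴴ - D2 * D2ᴴ + C * (P1 - P2) * Cᴴ)
    (hΓ : Γ = B1 * D1ᴴ - B2 * D2ᴴ + A * (P1 - P2) * Cᴴ) :
    ∀ z : ℂ, ‖z‖ = 1 →
      G z * (G ((starRingEnd ℂ z)⁻¹))ᴴ - K z * (K ((starRingEnd ℂ z)⁻¹))ᴴ =
        z • (C * (1 - z • A)⁻¹ * Γ) + R0 + Γᴴ * (z • (1 : Matrix (Fin n) (Fin n) ℂ) - Aᴴ)⁻¹ * Cᴴ := by
  intro z hz
  have hz0 : z ≠ 0 := by rintro rfl; simp at hz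
  have hAH : ∀ μ ∈ spectrum ℂ Aᴴ, ‖μ‖ < 1 := forall_norm_lt_one_spectrum_star hA
  have hU : IsUnit (1 - z • A).det :=
    (isUnit_iff_isUnit_det _).1 (isUnit_one_sub_smul_of_norm_le_one hA hz.le)
  have hV : IsUnit (1 - z⁻¹ • Aᴴ).det :=
    (isUnit_iff_isUnit_det _).1 (isUnit_one_sub_smul_of_norm_le_one hAH (by simp [hz]))
  have hP1h :=
    isHermitian_of_eq_mul_mul_conjTranspose_add hA (isHermitian_mul_conjTranspose_self B1) hP1
  have hP2h :=
    isHermitian_of_eq_mul_mul_conjTranspose_add hA (isHermitian_mul_conjTranspose_self B2) hP2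
  rw [hG z, hG, hK z, hK, transfer_mul_conjTranspose D1 hz0 hU hV hP1 hP1h,
    transfer_mul_conjTranspose D2 hz0 hU hV hP2 hP2h, hR0, hΓ]
  simp only [conjTranspose_add, conjTranspose_sub, Matrix.mul_add, Matrix.mul_sub, Matrix.add_mul,
    Matrix.sub_mul, smul_add, smul_sub]
  abel
end

section
/- Suppose U = [[α, β1, β2],[γ, δ1, δ2]] is a block matrix (mapping ℂ^n ⊕ ℂ^q ⊕ ℂ^r to ℂ^n ⊕ ℂ^p) such that [zΛ(z), G(z)] U = [Λ(z), K(z), F(z)] for all z in the open unit disc, where Λ, G, K, F are matrix functions holomorphic on the disc and I - zα is invertible for |z| < 1. Then Λ(z) = G(z) γ (I - zα)^{-1}, and consequently G(z) X(z) = K(z) where X(z) = δ1 + z γ (I - zα)^{-1} β1, and G(z) Ψ(z) = F(z) where Ψ(z) = δ2 + z γ (I - zα)^{-1} β2. -/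
open Matrix

/-- Suppose the block matrix `U = [[α, β1, β2],[γ, δ1, δ2]]` satisfies
`[zΛ(z), G(z)] U = [Λ(z), K(z), F(z)]` on the open unit disc (written componentwise), where
`I - zα` is invertible for `|z| < 1`. Then `Λ(z) = G(z) γ (I - zα)⁻¹`, and consequently
`G(z) X(z) = K(z)` with `X(z) = δ1 + zγ(I - zα)⁻¹β1` and `G(z) Ψ(z) = F(z)` with
`Ψ(z) = δ2 + zγ(I - zα)⁻¹β2`. -/
theorem stmt13 {n m p q r : ℕ}
    (G : ℂ → Matrix (Fin m) (Fin p) ℂ) (K : ℂ → Matrix (Fin m) (Fin q) ℂ)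
    (F : ℂ → Matrix (Fin m) (Fin r) ℂ) (Λ : ℂ → Matrix (Fin m) (Fin n) ℂ)
    (α : Matrix (Fin n) (Fin n) ℂ)
    (β1 : Matrix (Fin n) (Fin q) ℂ) (β2 : Matrix (Fin n) (Fin r) ℂ)
    (γ : Matrix (Fin p) (Fin n) ℂ)
    (δ1 : Matrix (Fin p) (Fin q) ℂ) (δ2 : Matrix (Fin p) (Fin r) ℂ)
    (hGhol : ∀ i j, DifferentiableOn ℂ (fun z => G z i j) (Metric.ball (0 : ℂ) 1))
    (hKhol : ∀ i j, DifferentiableOn ℂ (fun z => K z i j) (Metric.ball (0 : ℂ) 1))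
    (hFhol : ∀ i j, DifferentiableOn ℂ (fun z => F z i j) (Metric.ball (0 : ℂ) 1))
    (hΛhol : ∀ i j, DifferentiableOn ℂ (fun z => Λ z i j) (Metric.ball (0 : ℂ) 1))
    (hα : ∀ z : ℂ, ‖z‖ < 1 → IsUnit (1 - z • α))
    (hU1 : ∀ z : ℂ, ‖z‖ < 1 → z • (Λ z * α) + G z * γ = Λ z)
    (hU2 : ∀ z : ℂ, ‖z‖ < 1 → z • (Λ z * β1) + G z * δ1 = K z)
    (hU3 : ∀ z : ℂ, ‖z‖ < 1 → z • (Λ z * β2) + G z * δ2 = F z) :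
    ∀ z : ℂ, ‖z‖ < 1 →
      Λ z = G z * γ * (1 - z • α)⁻¹ ∧
      G z * (δ1 + z • (γ * (1 - z • α)⁻¹ * β1)) = K z ∧
      G z * (δ2 + z • (γ * (1 - z • α)⁻¹ * β2)) = F z := by
  intro z hz
  have hdet : IsUnit (1 - z • α).det := (Matrix.isUnit_iff_isUnit_det _).mp (hα z hz)
  have h1 : Λ z * (1 - z • α) = G z * γ := by
    have h := hU1 z hz
    rw [Matrix.mul_sub, Matrix.mul_one, Matrix.mul_smul, sub_eq_iff_eq_add]
    exact ((add_comm _ _).trans h).symm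
  have hΛ : Λ z = G z * γ * (1 - z • α)⁻¹ := by
    have := Matrix.mul_nonsing_inv_cancel_right (1 - z • α) (Λ z) hdet
    rw [← this, h1]
  refine ⟨hΛ, ?_, ?_⟩
  · have h := hU2 z hz
    rw [Matrix.mul_add, Matrix.mul_smul, ← Matrix.mul_assoc, ← Matrix.mul_assoc, ← hΛ, ← h]
    exact add_comm _ _
  · have h := hU3 z hz
    rw [Matrix.mul_add, Matrix.mul_smul, ← Matrix.mul_assoc, ← Matrix.mul_assoc, ← hΛ, ← h]
    exact add_comm _ _
end

section
/- Let U : H → K be a contraction between Hilbert spaces decomposed as U = [[α, β],[γ, δ]] : H1 ⊕ H2 → K1 ⊕ K2 with H1 = K1 = ℂ^n, and suppose the spectral radius of α is strictly less than 1. Then the function X(z) = δ + z γ (I - zα)^{-1} β satisfies ‖X(z)‖ ≤ 1 for every z in the open unit disc. -/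
/-- Let `U = [[α, β],[γ, δ]] : ℂ^n ⊕ H2 → ℂ^n ⊕ K2` be a contraction between Hilbert
spaces (with `H1 = K1 = ℂ^n`, here an `n`-dimensional Hilbert space `E`), and suppose the
spectral radius of `α` is strictly less than `1`. Then `X(z) = δ + zγ(I - zα)⁻¹β` satisfies
`‖X(z)‖ ≤ 1` for every `z` in the open unit disc. -/
theorem stmt14 {n : ℕ} {E H2 K2 : Type*}
    [NormedAddCommGroup E] [InnerProductSpace ℂ E] [FiniteDimensional ℂ E]
    (hdim : Module.finrank ℂ E = n)
    [NormedAddCommGroup H2] [InnerProductSpace ℂ H2] [CompleteSpace H2]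
    [NormedAddCommGroup K2] [InnerProductSpace ℂ K2] [CompleteSpace K2]
    (α : E →L[ℂ] E) (β : H2 →L[ℂ] E) (γ : E →L[ℂ] K2) (δ : H2 →L[ℂ] K2)
    (hcontr : ∀ (x : E) (h : H2),
      ‖α x + β h‖ ^ 2 + ‖γ x + δ h‖ ^ 2 ≤ ‖x‖ ^ 2 + ‖h‖ ^ 2)
    (hα : spectralRadius ℂ α < 1) :
    ∀ z : ℂ, ‖z‖ < 1 →
      ‖δ + z • (γ.comp ((Ring.inverse (1 - z • α)).comp β))‖ ≤ 1 := by
  intro z hz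
  -- `1 - z • α` is a unit
  have hz' : (‖z‖₊ : ENNReal) < (spectralRadius ℂ α)⁻¹ := by
    calc (‖z‖₊ : ENNReal) < 1 := by
          rw [← ENNReal.coe_one, ENNReal.coe_lt_coe]
          exact_mod_cast hz
      _ ≤ (spectralRadius ℂ α)⁻¹ := ENNReal.one_le_inv.mpr hα.le
  have hunit : IsUnit (1 - z • α) := spectrum.isUnit_one_sub_smul_of_lt_inv_radius hz'
  apply ContinuousLinearMap.opNorm_le_bound _ zero_le_one
  intro h
  rw [one_mul]
  set x : E := Ring.inverse (1 - z • α) (z • β h) with hxdef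
  have hinv : (1 - z • α) * Ring.inverse (1 - z • α) = 1 := Ring.mul_inverse_cancel _ hunit
  have hx : x = z • (α x + β h) := by
    have := congrArg (fun T : E →L[ℂ] E => T (z • β h)) hinv
    simp only [ContinuousLinearMap.mul_apply, ContinuousLinearMap.one_apply] at this
    have h1 : ((1 - z • α) : E →L[ℂ] E) x = z • β h := this
    simp only [ContinuousLinearMap.sub_apply, ContinuousLinearMap.one_apply,
      ContinuousLinearMap.smul_apply] at h1
    rw [smul_add]
    linear_combination (norm := module) h1
  have happ : (δ + z • (γ.comp ((Ring.inverse (1 - z • α)).comp β))) h = γ x + δ h := by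
    simp only [ContinuousLinearMap.add_apply, ContinuousLinearMap.smul_apply,
      ContinuousLinearMap.comp_apply, hxdef, map_smul]
    abel
  rw [happ]
  have hkey := hcontr x h
  have hxnorm : ‖x‖ ≤ ‖α x + β h‖ := by
    have heq : ‖x‖ = ‖z‖ * ‖α x + β h‖ := by
      have := congrArg norm hx
      rwa [norm_smul] at this
    rw [heq]
    calc ‖z‖ * ‖α x + β h‖ ≤ 1 * ‖α x + β h‖ :=
          mul_le_mul_of_nonneg_right hz.le (norm_nonneg _)
      _ = ‖α x + β h‖ := one_mul _
  nlinarith [norm_nonneg (γ x + δ h), norm_nonneg h, norm_nonneg x,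
    norm_nonneg (α x + β h)]
end
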